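/- arXiv:1410.3385 — 5 statements merged into one kernel-verified Lean document; each statement's English description precedes it below -/
import Mathlib

section
/- The Kantorovich lifting d^↑F of a pseudometric d on X along a functor F with evaluation function ev_F, defined by d^↑F(t₁,t₂) = sup { d_e(ev_F(Ff(t₁)), ev_F(Ff(t₂))) : f : (X,d) → ([0,⊤],d_e) nonexpansive }, is a pseudometric on FX, i.e. it satisfies reflexivity, symmetry, and the triangle inequality. -/
open ENNReal

/-- The extended Euclidean distance on `[0,∞]`. -/
noncomputable def de (a b : ℝ≥0∞) : ℝ≥0∞ := (a - b) + (b - a)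

theorem stmt5 (T : ℝ≥0∞) (hT : 0 < T)
    (F : Type → Type)
    (Fmap : ∀ {X Y : Type}, (X → Y) → F X → F Y)
    (ev : F ℝ≥0∞ → ℝ≥0∞)
    (X : Type) (d : X → X → ℝ≥0∞)
    (hrefl : ∀ x, d x x = 0) (hsymm : ∀ x y, d x y = d y x)
    (htri : ∀ x y z, d x z ≤ d x y + d y z) (hbound : ∀ x y, d x y ≤ T) :
    -- the Kantorovich lifting of d
    let dK : F X → F X → ℝ≥0∞ := fun t₁ t₂ =>
      ⨆ f : {f : X → ℝ≥0∞ // (∀ x, f x ≤ T) ∧ ∀ x y, de (f x) (f y) ≤ d x y},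
        de (ev (Fmap f.1 t₁)) (ev (Fmap f.1 t₂))
    -- is a pseudometric on F X
    (∀ t, dK t t = 0) ∧ (∀ t₁ t₂, dK t₁ t₂ = dK t₂ t₁) ∧
    (∀ t₁ t₂ t₃, dK t₁ t₃ ≤ dK t₁ t₂ + dK t₂ t₃) := by
  have hde_refl : ∀ a, de a a = 0 := fun a => by simp [de]
  have hde_symm : ∀ a b, de a b = de b a := fun a b => by simp [de, add_comm]
  have hde_tri : ∀ a b c, de a c ≤ de a b + de b c := by
    intro a b c
    have h1 : a - c ≤ (a - b) + (b - c) := tsub_le_tsub_add_tsub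
    have h2 : c - a ≤ (c - b) + (b - a) := tsub_le_tsub_add_tsub
    calc de a c = (a - c) + (c - a) := rfl
      _ ≤ ((a - b) + (b - c)) + ((c - b) + (b - a)) := add_le_add h1 h2
      _ = de a b + de b c := by simp [de]; ring
  intro dK
  refine ⟨fun t => ?_, fun t₁ t₂ => ?_, fun t₁ t₂ t₃ => ?_⟩
  · simp only [dK, hde_refl, iSup_const, ciSup_const]
    exact iSup_eq_zero.mpr fun _ => rfl
  · simp only [dK]
    exact iSup_congr fun f => hde_symm _ _
  · refine iSup_le fun f => ?_
    calc de (ev (Fmap f.1 t₁)) (ev (Fmap f.1 t₃))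
        ≤ de (ev (Fmap f.1 t₁)) (ev (Fmap f.1 t₂))
          + de (ev (Fmap f.1 t₂)) (ev (Fmap f.1 t₃)) := hde_tri _ _ _
      _ ≤ dK t₁ t₂ + dK t₂ t₃ :=
          add_le_add (le_iSup (fun g : {f : X → ℝ≥0∞ // (∀ x, f x ≤ T) ∧ ∀ x y, de (f x) (f y) ≤ d x y} => de (ev (Fmap g.1 t₁)) (ev (Fmap g.1 t₂))) f)
            (le_iSup (fun g : {f : X → ℝ≥0∞ // (∀ x, f x ≤ T) ∧ ∀ x y, de (f x) (f y) ≤ d x y} => de (ev (Fmap g.1 t₂)) (ev (Fmap g.1 t₃))) f)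
end

section
/- For the functor FX = X × X with Ff = f × f and evaluation function ev_F(r₁,r₂) = r₁ + r₂ on [0,∞], the Kantorovich lifting does not preserve metrics: for any metric space (X,d) with at least two distinct points x₁ ≠ x₂, the elements t₁ = (x₁,x₂) and t₂ = (x₂,x₁) satisfy d^↑F(t₁,t₂) = 0 although t₁ ≠ t₂. -/
open ENNReal

/-- For `F X = X × X` with `ev_F (r₁, r₂) = r₁ + r₂`, the Kantorovich lifting does not
preserve metrics: `t₁ = (x₁,x₂)` and `t₂ = (x₂,x₁)` are at Kantorovich distance 0
although they are distinct. -/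
theorem stmt6 {X : Type*} (d : X → X → ℝ≥0∞)
    (hrefl : ∀ x, d x x = 0) (hsymm : ∀ x y, d x y = d y x)
    (htri : ∀ x y z, d x z ≤ d x y + d y z)
    (hmetric : ∀ x y, d x y = 0 → x = y)
    (x₁ x₂ : X) (hne : x₁ ≠ x₂) :
    (⨆ f : {f : X → ℝ≥0∞ // ∀ x y, de (f x) (f y) ≤ d x y},
        de (f.1 x₁ + f.1 x₂) (f.1 x₂ + f.1 x₁)) = 0 ∧
    ((x₁, x₂) : X × X) ≠ (x₂, x₁) := by
  constructor
  · simp only [iSup_eq_zero]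
    intro f
    rw [add_comm (f.1 x₂)]
    simp [de]
  · intro h
    exact hne (congrArg Prod.fst h)
end

section
/- The Wasserstein lifting of the finite powerset functor with evaluation max yields the Hausdorff distance: for a pseudometric space (X,d) with values in [0,∞] and nonempty finite subsets X₁, X₂ ⊆ X, inf { max_{(x₁,x₂)∈R} d(x₁,x₂) : R ⊆ X×X finite, π₁[R] = X₁, π₂[R] = X₂ } = max( max_{x₁∈X₁} min_{x₂∈X₂} d(x₁,x₂), max_{x₂∈X₂} min_{x₁∈X₁} d(x₁,x₂) ), and moreover the infimum is attained. -/
open ENNReal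

/-- The Wasserstein lifting of the finite powerset functor with evaluation `max`
yields the Hausdorff distance, and the infimum over couplings is attained. -/
theorem stmt10 {X : Type*} [DecidableEq X] (d : X → X → ℝ≥0∞)
    (hrefl : ∀ x, d x x = 0) (hsymm : ∀ x y, d x y = d y x)
    (htri : ∀ x y z, d x z ≤ d x y + d y z)
    (X₁ X₂ : Finset X) (h₁ : X₁.Nonempty) (h₂ : X₂.Nonempty) :
    let dH : ℝ≥0∞ :=
      max (X₁.sup fun x₁ => X₂.inf fun x₂ => d x₁ x₂)
          (X₂.sup fun x₂ => X₁.inf fun x₁ => d x₁ x₂)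
    sInf {v : ℝ≥0∞ | ∃ R : Finset (X × X),
        R.image Prod.fst = X₁ ∧ R.image Prod.snd = X₂ ∧
        v = R.sup (fun p => d p.1 p.2)} = dH ∧
    ∃ R : Finset (X × X), R.image Prod.fst = X₁ ∧ R.image Prod.snd = X₂ ∧
      R.sup (fun p => d p.1 p.2) = dH := by
  intro dH
  -- choice of nearest points
  have hm : ∀ x : X, ∃ y ∈ X₂, (X₂.inf fun x₂ => d x x₂) = d x y := fun x =>
    Finset.exists_mem_eq_inf X₂ h₂ _
  have hn : ∀ y : X, ∃ x ∈ X₁, (X₁.inf fun x₁ => d x₁ y) = d x y := fun y =>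
    Finset.exists_mem_eq_inf X₁ h₁ _
  choose m hm₁ hm₂ using hm
  choose n hn₁ hn₂ using hn
  set R₀ : Finset (X × X) :=
    (X₁.image fun x => (x, m x)) ∪ (X₂.image fun y => (n y, y)) with hR₀
  have hfst : R₀.image Prod.fst = X₁ := by
    apply Finset.Subset.antisymm
    · intro a ha
      obtain ⟨p, hp, rfl⟩ := Finset.mem_image.1 ha
      rcases Finset.mem_union.1 hp with hp | hp <;>
        obtain ⟨x, hx, rfl⟩ := Finset.mem_image.1 hp
      · exact hx
      · exact hn₁ x
    · intro a ha
      exact Finset.mem_image.2 ⟨(a, m a),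
        Finset.mem_union.2 (Or.inl (Finset.mem_image.2 ⟨a, ha, rfl⟩)), rfl⟩
  have hsnd : R₀.image Prod.snd = X₂ := by
    apply Finset.Subset.antisymm
    · intro a ha
      obtain ⟨p, hp, rfl⟩ := Finset.mem_image.1 ha
      rcases Finset.mem_union.1 hp with hp | hp <;>
        obtain ⟨x, hx, rfl⟩ := Finset.mem_image.1 hp
      · exact hm₁ x
      · exact hx
    · intro a ha
      exact Finset.mem_image.2 ⟨(n a, a),
        Finset.mem_union.2 (Or.inr (Finset.mem_image.2 ⟨a, ha, rfl⟩)), rfl⟩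
  have hsup : R₀.sup (fun p => d p.1 p.2) = dH := by
    have : R₀.sup (fun p => d p.1 p.2)
        = max ((X₁.image fun x => (x, m x)).sup fun p => d p.1 p.2)
              ((X₂.image fun y => (n y, y)).sup fun p => d p.1 p.2) := by
      simp [hR₀, Finset.sup_union]
    rw [this]
    have e1 : ((X₁.image fun x => (x, m x)).sup fun p => d p.1 p.2)
        = X₁.sup fun x₁ => X₂.inf fun x₂ => d x₁ x₂ := by
      rw [Finset.sup_image]
      exact Finset.sup_congr rfl fun x _ => (hm₂ x).symm
    have e2 : ((X₂.image fun y => (n y, y)).sup fun p => d p.1 p.2)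
        = X₂.sup fun x₂ => X₁.inf fun x₁ => d x₁ x₂ := by
      rw [Finset.sup_image]
      exact Finset.sup_congr rfl fun y _ => (hn₂ y).symm
    rw [e1, e2]
  constructor
  · apply le_antisymm
    · exact csInf_le (OrderBot.bddBelow _) ⟨R₀, hfst, hsnd, hsup.symm⟩
    · apply le_csInf ⟨R₀.sup (fun p => d p.1 p.2), Set.mem_setOf.2 ⟨R₀, hfst, hsnd, rfl⟩⟩
      rintro v ⟨R, hf, hs, rfl⟩
      apply max_le
      · apply Finset.sup_le
        intro x hx
        rw [← hf] at hx
        obtain ⟨p, hp, rfl⟩ := Finset.mem_image.1 hx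
        calc (X₂.inf fun x₂ => d p.1 x₂) ≤ d p.1 p.2 :=
              Finset.inf_le (hs ▸ Finset.mem_image_of_mem _ hp)
          _ ≤ _ := Finset.le_sup (f := fun p => d p.1 p.2) hp
      · apply Finset.sup_le
        intro y hy
        rw [← hs] at hy
        obtain ⟨p, hp, rfl⟩ := Finset.mem_image.1 hy
        calc (X₁.inf fun x₁ => d x₁ p.2) ≤ d p.1 p.2 :=
              Finset.inf_le (hf ▸ Finset.mem_image_of_mem _ hp)
          _ ≤ _ := Finset.le_sup (f := fun p => d p.1 p.2) hp
  · exact ⟨R₀, hfst, hsnd, hsup⟩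
end

section
/- For the product of two pseudometric spaces (X₁,d₁), (X₂,d₂) with the max-metric d_∞((x₁,x₂),(y₁,y₂)) = max(d₁(x₁,y₁), d₂(x₂,y₂)), and for nonexpansive f₁ : (X₁,d₁) → ([0,⊤],d_e), f₂ : (X₂,d₂) → ([0,⊤],d_e), the function (x₁,x₂) ↦ max(f₁(x₁), f₂(x₂)) is nonexpansive from (X₁×X₂, d_∞) to ([0,⊤],d_e); moreover d_∞((x₁,x₂),(y₁,y₂)) is attained as d_e(max(f₁(x₁),f₂(x₂)), max(f₁(y₁),f₂(y₂))) for suitable choices f₁ = d₁(x₁,·) or 0 and f₂ = d₂(x₂,·) or 0. -/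
open ENNReal

/-! The function `max (f₁ x₁) (f₂ x₂)` is nonexpansive because `max` is nonexpansive for `de`
in both arguments jointly. For attainment, put the distance function from `x₁` (resp. `x₂`),
nonexpansive by the triangle inequality, on the factor with the larger distance and `0` on the
other. -/

lemma de_comm (a b : ℝ≥0∞) : de a b = de b a := add_comm _ _

@[simp] lemma de_self (a : ℝ≥0∞) : de a a = 0 := by simp [de]

@[simp] lemma de_zero_left (a : ℝ≥0∞) : de 0 a = a := by simp [de]

lemma de_le_iff {a b c : ℝ≥0∞} : de a b ≤ c ↔ a ≤ c + b ∧ b ≤ c + a := by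
  rcases le_total a b with h | h <;>
    simp [de, tsub_eq_zero_of_le h, tsub_le_iff_right, h.trans le_add_self]

lemma le_de_add (a b : ℝ≥0∞) : a ≤ de a b + b := (de_le_iff.mp le_rfl).1

lemma de_max_max_le (a b c d : ℝ≥0∞) :
    de (max a c) (max b d) ≤ max (de a b) (de c d) := by
  have key : ∀ a b c d : ℝ≥0∞, max a c ≤ max (de a b) (de c d) + max b d := fun a b c d =>
    max_le ((le_de_add a b).trans (add_le_add (le_max_left _ _) (le_max_left _ _)))
      ((le_de_add c d).trans (add_le_add (le_max_right _ _) (le_max_right _ _)))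
  refine de_le_iff.mpr ⟨key a b c d, ?_⟩
  simpa only [de_comm b a, de_comm d c] using key b a d c

lemma de_dist_le {X : Type*} {d : X → X → ℝ≥0∞} (symm : ∀ x y, d x y = d y x)
    (tri : ∀ x y z, d x z ≤ d x y + d y z) (z x y : X) :
    de (d z x) (d z y) ≤ d x y := by
  refine de_le_iff.mpr ⟨?_, ?_⟩
  · calc d z x ≤ d z y + d y x := tri _ _ _
      _ = d x y + d z y := by rw [symm y x, add_comm]
  · calc d z y ≤ d z x + d x y := tri _ _ _
      _ = d x y + d z x := add_comm _ _

theorem stmt14_general (T : ℝ≥0∞) {X₁ X₂ : Type*}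
    (d₁ : X₁ → X₁ → ℝ≥0∞) (d₂ : X₂ → X₂ → ℝ≥0∞)
    (h₁refl : ∀ x, d₁ x x = 0) (h₁symm : ∀ x y, d₁ x y = d₁ y x)
    (h₁tri : ∀ x y z, d₁ x z ≤ d₁ x y + d₁ y z) (h₁T : ∀ x y, d₁ x y ≤ T)
    (h₂refl : ∀ x, d₂ x x = 0) (h₂symm : ∀ x y, d₂ x y = d₂ y x)
    (h₂tri : ∀ x y z, d₂ x z ≤ d₂ x y + d₂ y z) (h₂T : ∀ x y, d₂ x y ≤ T) :
    -- (a) max(f₁, f₂) is nonexpansive w.r.t. the max-metric d_∞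
    (∀ (f₁ : X₁ → ℝ≥0∞) (f₂ : X₂ → ℝ≥0∞),
      (∀ x, f₁ x ≤ T) → (∀ x y, de (f₁ x) (f₁ y) ≤ d₁ x y) →
      (∀ x, f₂ x ≤ T) → (∀ x y, de (f₂ x) (f₂ y) ≤ d₂ x y) →
      ∀ (x₁ y₁ : X₁) (x₂ y₂ : X₂),
        de (max (f₁ x₁) (f₂ x₂)) (max (f₁ y₁) (f₂ y₂)) ≤
          max (d₁ x₁ y₁) (d₂ x₂ y₂)) ∧
    -- (b) the distance d_∞ is attained by suitable nonexpansive functions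
    (∀ (x₁ y₁ : X₁) (x₂ y₂ : X₂),
      ∃ (f₁ : X₁ → ℝ≥0∞) (f₂ : X₂ → ℝ≥0∞),
        (∀ x, f₁ x ≤ T) ∧ (∀ x y, de (f₁ x) (f₁ y) ≤ d₁ x y) ∧
        (∀ x, f₂ x ≤ T) ∧ (∀ x y, de (f₂ x) (f₂ y) ≤ d₂ x y) ∧
        de (max (f₁ x₁) (f₂ x₂)) (max (f₁ y₁) (f₂ y₂)) =
          max (d₁ x₁ y₁) (d₂ x₂ y₂)) := by
  refine ⟨fun f₁ f₂ _ hf₁ _ hf₂ x₁ y₁ x₂ y₂ =>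
    (de_max_max_le _ _ _ _).trans (max_le_max (hf₁ x₁ y₁) (hf₂ x₂ y₂)),
    fun x₁ y₁ x₂ y₂ => ?_⟩
  rcases le_total (d₁ x₁ y₁) (d₂ x₂ y₂) with h | h
  · refine ⟨0, d₂ x₂, fun _ => zero_le, fun _ _ => by simp, h₂T x₂,
      de_dist_le h₂symm h₂tri x₂, ?_⟩
    simp [h₂refl, max_eq_right h]
  · refine ⟨d₁ x₁, 0, h₁T x₁, de_dist_le h₁symm h₁tri x₁, fun _ => zero_le,
      fun _ _ => by simp, ?_⟩
    simp [h₁refl, max_eq_left h]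

/-- Kantorovich–Rubinstein duality for the product bifunctor with evaluation `max`. -/
theorem stmt14 (T : ℝ≥0∞) (hT : 0 < T) {X₁ X₂ : Type*}
    (d₁ : X₁ → X₁ → ℝ≥0∞) (d₂ : X₂ → X₂ → ℝ≥0∞)
    (h₁refl : ∀ x, d₁ x x = 0) (h₁symm : ∀ x y, d₁ x y = d₁ y x)
    (h₁tri : ∀ x y z, d₁ x z ≤ d₁ x y + d₁ y z) (h₁T : ∀ x y, d₁ x y ≤ T)
    (h₂refl : ∀ x, d₂ x x = 0) (h₂symm : ∀ x y, d₂ x y = d₂ y x)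
    (h₂tri : ∀ x y z, d₂ x z ≤ d₂ x y + d₂ y z) (h₂T : ∀ x y, d₂ x y ≤ T) :
    -- (a) max(f₁, f₂) is nonexpansive w.r.t. the max-metric d_∞
    (∀ (f₁ : X₁ → ℝ≥0∞) (f₂ : X₂ → ℝ≥0∞),
      (∀ x, f₁ x ≤ T) → (∀ x y, de (f₁ x) (f₁ y) ≤ d₁ x y) →
      (∀ x, f₂ x ≤ T) → (∀ x y, de (f₂ x) (f₂ y) ≤ d₂ x y) →
      ∀ (x₁ y₁ : X₁) (x₂ y₂ : X₂),
        de (max (f₁ x₁) (f₂ x₂)) (max (f₁ y₁) (f₂ y₂)) ≤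
          max (d₁ x₁ y₁) (d₂ x₂ y₂)) ∧
    -- (b) the distance d_∞ is attained by suitable nonexpansive functions
    (∀ (x₁ y₁ : X₁) (x₂ y₂ : X₂),
      ∃ (f₁ : X₁ → ℝ≥0∞) (f₂ : X₂ → ℝ≥0∞),
        (∀ x, f₁ x ≤ T) ∧ (∀ x y, de (f₁ x) (f₁ y) ≤ d₁ x y) ∧
        (∀ x, f₂ x ≤ T) ∧ (∀ x y, de (f₂ x) (f₂ y) ≤ d₂ x y) ∧
        de (max (f₁ x₁) (f₂ x₂)) (max (f₁ y₁) (f₂ y₂)) =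
          max (d₁ x₁ y₁) (d₂ x₂ y₂)) :=
  stmt14_general T d₁ d₂ h₁refl h₁symm h₁tri h₁T h₂refl h₂symm h₂tri h₂T
end

section
/- ω-continuity of the Hausdorff lifting for finite sets: let (d_i)_{i∈ℕ} be an increasing chain of pseudometrics on X with values in [0,∞] and d = sup_i d_i. Then for all nonempty finite X₁, X₂ ⊆ X, the Hausdorff distance satisfies d_H(X₁,X₂) (computed with d) = sup_i d_H^{(i)}(X₁,X₂) (computed with d_i). -/
open ENNReal

lemma sup_iSup_swap {X : Type*} (S : Finset X) (f : ℕ → X → ℝ≥0∞) :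
    (S.sup fun x => ⨆ i, f i x) = ⨆ i, S.sup (f i) := by
  apply le_antisymm
  · exact Finset.sup_le fun x hx => iSup_le fun i =>
      le_iSup_of_le i (Finset.le_sup (f := f i) hx)
  · exact iSup_le fun i => Finset.sup_le fun x hx =>
      Finset.le_sup_of_le hx (le_iSup (fun i => f i x) i)

lemma inf_iSup_swap {X : Type*} {S : Finset X} (hS : S.Nonempty) (f : ℕ → X → ℝ≥0∞)
    (hmono : ∀ i j, i ≤ j → ∀ x, f i x ≤ f j x) :
    (S.inf fun x => ⨆ i, f i x) = ⨆ i, S.inf (f i) := by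
  induction hS using Finset.Nonempty.cons_induction with
  | singleton a => simp
  | cons a s ha hs ih =>
      simp only [Finset.inf_cons, ih]
      exact (iSup_inf_of_monotone (fun i j hij => hmono i j hij a)
        (fun i j hij => Finset.inf_mono_fun fun x _ => hmono i j hij x)).symm

/-- ω-continuity of the Hausdorff lifting for nonempty finite sets. -/
theorem stmt19 {X : Type*} (d : ℕ → X → X → ℝ≥0∞)
    (hrefl : ∀ i x, d i x x = 0) (hsymm : ∀ i x y, d i x y = d i y x)
    (htri : ∀ i x y z, d i x z ≤ d i x y + d i y z)
    (hmono : ∀ i j, i ≤ j → ∀ x y, d i x y ≤ d j x y)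
    (X₁ X₂ : Finset X) (h₁ : X₁.Nonempty) (h₂ : X₂.Nonempty) :
    let D : X → X → ℝ≥0∞ := fun x y => ⨆ i, d i x y
    let dH : (X → X → ℝ≥0∞) → ℝ≥0∞ := fun e =>
      max (X₁.sup fun x₁ => X₂.inf fun x₂ => e x₁ x₂)
          (X₂.sup fun x₂ => X₁.inf fun x₁ => e x₁ x₂)
    dH D = ⨆ i, dH (d i) := by
  intro D dH
  have hA : (X₁.sup fun x₁ => X₂.inf fun x₂ => D x₁ x₂)
      = ⨆ i, X₁.sup fun x₁ => X₂.inf fun x₂ => d i x₁ x₂ := by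
    have : ∀ x₁, (X₂.inf fun x₂ => D x₁ x₂) = ⨆ i, X₂.inf fun x₂ => d i x₁ x₂ :=
      fun x₁ => inf_iSup_swap h₂ (fun i x₂ => d i x₁ x₂)
        (fun i j hij x₂ => hmono i j hij x₁ x₂)
    simp only [this]
    exact sup_iSup_swap X₁ (fun i x₁ => X₂.inf fun x₂ => d i x₁ x₂)
  have hB : (X₂.sup fun x₂ => X₁.inf fun x₁ => D x₁ x₂)
      = ⨆ i, X₂.sup fun x₂ => X₁.inf fun x₁ => d i x₁ x₂ := by
    have : ∀ x₂, (X₁.inf fun x₁ => D x₁ x₂) = ⨆ i, X₁.inf fun x₁ => d i x₁ x₂ :=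
      fun x₂ => inf_iSup_swap h₁ (fun i x₁ => d i x₁ x₂)
        (fun i j hij x₁ => hmono i j hij x₁ x₂)
    simp only [this]
    exact sup_iSup_swap X₂ (fun i x₂ => X₁.inf fun x₁ => d i x₁ x₂)
  show max _ _ = _
  rw [hA, hB]
  apply le_antisymm
  · apply max_le
    · exact iSup_mono fun i => le_max_left _ _
    · exact iSup_mono fun i => le_max_right _ _
  · exact iSup_le fun i => max_le
      (le_max_of_le_left (le_iSup (fun i => X₁.sup fun x₁ => X₂.inf fun x₂ => d i x₁ x₂) i))
      (le_max_of_le_right (le_iSup (fun i => X₂.sup fun x₂ => X₁.inf fun x₁ => d i x₁ x₂) i))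
end
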